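/- Let G be a connected simple graph on n vertices. Then the second smallest distance Laplacian eigenvalue ∂_{n−1}^L(G) equals n if and only if the complement of G is disconnected; moreover, the multiplicity of n as a distance Laplacian eigenvalue of G is one less than the number of connected components of the complement of G. -/

import Mathlib

/-!
Write `J` for the all-ones matrix and `w(u, v) = d(u, v) - 1` (`u ≠ v`). For connected `G`,
`D^L(G) = n I - J + L_w`, where `L_w` is the Laplacian of the nonnegative weights `w`, and
`w(u, v) > 0` exactly when `uv` is an edge of the complement. Eigenvectors of nonzero
eigenvalues are orthogonal to the all-ones vector, where `D^L(G) ≥ n I`; so the spectrum consists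
of `0` (simple, with the constant eigenvectors, since `G` is connected) and of values `≥ n`. The
eigenvectors for `n` are the vectors orthogonal to the all-ones vector that `L_w` annihilates,
i.e. those with coordinate sum zero that are constant on the components of `Gᶜ`:
a space of dimension `c(Gᶜ) - 1`. In the decreasing order `0` is the last eigenvalue, so the
penultimate one equals `n` iff `n` occurs at all, i.e. iff `Gᶜ` is disconnected.
-/

open Finset Matrix Polynomial

/-- The transmission `Tr(v)` of a vertex `v`: the sum of the distances from `v`
to all other vertices of the graph. -/
noncomputable def transm {n : ℕ} (G : SimpleGraph (Fin n)) (v : Fin n) : ℝ :=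
  ∑ u : Fin n, (G.dist v u : ℝ)

/-- The distance Laplacian matrix `D^L(G) = Diag(Tr) - D(G)` of a graph `G`. -/
noncomputable def distLap {n : ℕ} (G : SimpleGraph (Fin n)) : Matrix (Fin n) (Fin n) ℝ :=
  Matrix.diagonal (transm G) - Matrix.of (fun u v : Fin n => (G.dist u v : ℝ))

/-- `IsDLSpec G μ` says that `μ 0 , μ 1 , …, μ (n-1)` are exactly the eigenvalues
(with multiplicity) of the distance Laplacian matrix of `G`; combined with `Antitone μ`
this means `μ ⟨i-1,_⟩ = ∂_i^L(G)` in the usual decreasing ordering. -/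
def IsDLSpec {n : ℕ} (G : SimpleGraph (Fin n)) (μ : Fin n → ℝ) : Prop :=
  (distLap G).charpoly = ∏ i : Fin n, (X - C (μ i))

/-- The Wiener index `W(G) = (1/2) ∑_v Tr(v)`. -/
noncomputable def wiener {n : ℕ} (G : SimpleGraph (Fin n)) : ℝ :=
  (∑ v : Fin n, transm G v) / 2

/-- The maximum transmission `Tr_max(G) = max_v Tr(v)`. -/
noncomputable def trMax {n : ℕ} (G : SimpleGraph (Fin n)) : ℝ :=
  ⨆ v : Fin n, transm G v

open Module

section WeightedLaplacian

variable {ι : Type*} [Fintype ι] {w : ι → ι → ℝ}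

def weightedLap (w : ι → ι → ℝ) (x : ι → ℝ) : ι → ℝ :=
  fun v => ∑ u, w v u * (x v - x u)

theorem dotProduct_weightedLap (hw : ∀ u v, w u v = w v u) (x y : ι → ℝ) :
    y ⬝ᵥ weightedLap w x = (∑ u, ∑ v, w u v * (y u - y v) * (x u - x v)) / 2 := by
  have hswap : ∑ u, ∑ v, w u v * y v * (x u - x v) = -∑ u, ∑ v, w u v * y u * (x u - x v) := by
    rw [Finset.sum_comm, ← Finset.sum_neg_distrib]
    refine Finset.sum_congr rfl fun u _ => ?_
    rw [← Finset.sum_neg_distrib]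
    refine Finset.sum_congr rfl fun v _ => ?_
    rw [hw]; ring
  have hsplit : ∑ u, ∑ v, w u v * (y u - y v) * (x u - x v)
      = ∑ u, ∑ v, w u v * y u * (x u - x v) - ∑ u, ∑ v, w u v * y v * (x u - x v) := by
    simp only [← Finset.sum_sub_distrib]
    exact Finset.sum_congr rfl fun u _ => Finset.sum_congr rfl fun v _ => by ring
  have hdot : y ⬝ᵥ weightedLap w x = ∑ u, ∑ v, w u v * y u * (x u - x v) := by
    simp only [dotProduct, weightedLap, Finset.mul_sum]
    exact Finset.sum_congr rfl fun u _ => Finset.sum_congr rfl fun v _ => by ring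
  linarith

theorem sum_weightedLap (hw : ∀ u v, w u v = w v u) (x : ι → ℝ) : ∑ v, weightedLap w x v = 0 := by
  rw [← one_dotProduct, dotProduct_weightedLap hw]
  simp

theorem dotProduct_weightedLap_self_nonneg (hw : ∀ u v, w u v = w v u) (hw₀ : ∀ u v, 0 ≤ w u v)
    (x : ι → ℝ) : 0 ≤ x ⬝ᵥ weightedLap w x := by
  rw [dotProduct_weightedLap hw]
  refine div_nonneg (Finset.sum_nonneg fun u _ => Finset.sum_nonneg fun v _ => ?_) zero_le_two
  rw [mul_assoc]
  exact mul_nonneg (hw₀ u v) (mul_self_nonneg _)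

theorem weightedLap_eq_zero_iff (hw : ∀ u v, w u v = w v u) (hw₀ : ∀ u v, 0 ≤ w u v)
    {x : ι → ℝ} : weightedLap w x = 0 ↔ ∀ u v, w u v ≠ 0 → x u = x v := by
  constructor
  · intro h u v huv
    have hform := dotProduct_weightedLap hw x x
    rw [h, dotProduct_zero, eq_comm, div_eq_zero_iff, or_iff_left two_ne_zero] at hform
    have hterm : ∀ u v, 0 ≤ w u v * (x u - x v) * (x u - x v) := fun u v => by
      rw [mul_assoc]; exact mul_nonneg (hw₀ u v) (mul_self_nonneg _)
    rw [Finset.sum_eq_zero_iff_of_nonneg fun u _ => Finset.sum_nonneg fun v _ => hterm u v] at hform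
    have huv0 := (Finset.sum_eq_zero_iff_of_nonneg fun v _ => hterm u v).1
      (hform u (Finset.mem_univ u)) v (Finset.mem_univ v)
    rw [mul_assoc, mul_eq_zero, or_iff_right huv, mul_self_eq_zero, sub_eq_zero] at huv0
    exact huv0
  · intro h
    funext v
    refine Finset.sum_eq_zero fun u _ => ?_
    by_cases hvu : w v u = 0
    · rw [hvu, zero_mul]
    · rw [h v u hvu, sub_self, mul_zero]

end WeightedLaplacian

theorem Submodule.finrank_inf_ker_add_one {K V : Type*} [Field K] [AddCommGroup V] [Module K V]
    {p : Submodule K V} [FiniteDimensional K p] {f : Module.Dual K V} {x : V} (hx : x ∈ p)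
    (hfx : f x ≠ 0) : finrank K (p ⊓ LinearMap.ker f : Submodule K V) + 1 = finrank K p := by
  have hf : f.domRestrict p ≠ 0 := fun h => hfx (LinearMap.congr_fun h ⟨x, hx⟩)
  rw [← Module.Dual.finrank_ker_add_one_of_ne_zero hf, LinearMap.ker_domRestrict,
    ← Submodule.map_comap_subtype, Submodule.finrank_map_subtype_eq]

theorem SimpleGraph.finrank_ker_lapMatrix_inf_ker_sum_add_one {V : Type*} [Fintype V]
    [DecidableEq V] [Nonempty V] (H : SimpleGraph V) [DecidableRel H.Adj] :
    finrank ℝ (LinearMap.ker (toLin' (H.lapMatrix ℝ)) ⊓ LinearMap.ker (dotProductEquiv ℝ V 1) :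
      Submodule ℝ (V → ℝ)) + 1 = Fintype.card H.ConnectedComponent := by
  rw [H.card_connectedComponent_eq_finrank_ker_toLin'_lapMatrix]
  refine Submodule.finrank_inf_ker_add_one (x := 1) ?_ ?_
  · rw [LinearMap.mem_ker, toLin'_apply]
    exact H.lapMatrix_mulVec_const_eq_zero
  · simp

theorem SimpleGraph.one_lt_card_connectedComponent_iff {V : Type*} [Finite V] [Nonempty V]
    (H : SimpleGraph V) : 1 < Nat.card H.ConnectedComponent ↔ ¬ H.Connected := by
  rw [Finite.one_lt_card_iff_nontrivial, ← not_subsingleton_iff_nontrivial,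
    H.connected_iff, and_iff_left ‹Nonempty V›]
  refine not_congr ⟨fun _ u v => ?_, fun h => h.subsingleton_connectedComponent⟩
  exact SimpleGraph.ConnectedComponent.eq.mp (Subsingleton.elim _ _)

theorem Matrix.hasEigenvalue_toLin'_of_charpoly_eq_prod {ι K : Type*} [Fintype ι] [DecidableEq ι]
    [Field K] {A : Matrix ι ι K} {μ : ι → K} (hμ : A.charpoly = ∏ i, (X - C (μ i))) (i : ι) :
    End.HasEigenvalue (toLin' A) (μ i) := by
  rw [End.hasEigenvalue_iff_isRoot_charpoly, Matrix.charpoly_toLin', hμ, IsRoot, eval_prod]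
  exact Finset.prod_eq_zero (Finset.mem_univ i) (by simp)

theorem Matrix.IsHermitian.ncard_eq_finrank_eigenspace {ι : Type*} [Fintype ι] [DecidableEq ι]
    {A : Matrix ι ι ℝ} (hA : A.IsHermitian) {μ : ι → ℝ}
    (hμ : A.charpoly = ∏ i, (X - C (μ i))) (t : ℝ) :
    {i | μ i = t}.ncard = finrank ℝ (End.eigenspace (toLin' A) t) := by
  have hroots : A.charpoly.roots = univ.val.map μ := by
    rw [hμ, prod_eq_multiset_prod, ← roots_multiset_prod_X_sub_C (univ.val.map μ),
      Multiset.map_map]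
    rfl
  have hcount := congrArg (Multiset.count t) (hroots.symm.trans hA.roots_charpoly_eq_eigenvalues₀)
  simp only [Multiset.count_map, RCLike.ofReal_real_eq_id, Function.id_comp, ← Finset.filter_val,
    ← Finset.card_def, eq_comm (a := t)] at hcount
  -- Mathlib counts multiplicities for the operator on `EuclideanSpace`; transport them to `toLin'`.
  have heig : End.eigenspace (toLpLin 2 2 A) t
      = (End.eigenspace (toLin' A) t).comap (WithLp.linearEquiv 2 ℝ (ι → ℝ)).toLinearMap := by
    ext x
    simp only [End.mem_eigenspace_iff, Submodule.mem_comap, LinearEquiv.coe_coe,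
      WithLp.linearEquiv_apply, toLin'_apply]
    rw [← (WithLp.ofLp_injective 2).eq_iff]
    rfl
  rw [Set.ncard_eq_toFinset_card', Set.toFinset_ofPred, hcount,
    ← LinearEquiv.finrank_map_eq (WithLp.linearEquiv 2 ℝ (ι → ℝ)).symm,
    ← Submodule.comap_equiv_eq_map_symm, ← heig]
  exact (isSymmetric_toEuclideanLin_iff.mpr hA).card_filter_eigenvalues_eq finrank_euclideanSpace t

theorem Fin.apply_penultimate_eq_iff_of_antitone {m : ℕ} {μ : Fin m → ℝ} (hμ : Antitone μ)
    {a : ℝ} (ha : 0 < a) (hgap : ∀ i, μ i = 0 ∨ a ≤ μ i) (hzero : {i | μ i = 0}.ncard = 1)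
    (k : Fin m) (hk : (k : ℕ) = m - 2) : μ k = a ↔ ∃ j, μ j = a := by
  obtain ⟨z, hz⟩ := Set.ncard_eq_one.mp hzero
  have hz0 : μ z = 0 := hz.symm.subset rfl
  have hge : ∀ i, i ≠ z → a ≤ μ i := fun i hi =>
    (hgap i).resolve_left fun h => hi (hz.subset h)
  have hlast : ∀ i, i ≤ z := fun i => not_lt.mp fun hzi => by
    linarith [hge i hzi.ne', hμ hzi.le]
  refine ⟨fun h => ⟨k, h⟩, fun ⟨j, hj⟩ => ?_⟩
  have hjz : j ≠ z := fun h => ha.ne' (hj.symm.trans (h ▸ hz0))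
  have hzval : m - 1 ≤ (z : ℕ) := hlast ⟨m - 1, by omega⟩
  have hjlt : (j : ℕ) < z := lt_of_le_of_ne (hlast j) (Fin.val_ne_of_ne hjz)
  have hjk : j ≤ k := Fin.le_def.mpr (by omega)
  have hkz : k ≠ z := fun h => by rw [h] at hk; omega
  exact le_antisymm (hj ▸ hμ hjk) (hge k hkz)

namespace SimpleGraph

variable {V : Type*} {G : SimpleGraph V}

/-- Truncated subtraction makes this `0` on the diagonal; for `u ≠ v` in a connected graph,
`d(u, v) = 1 + excessDist u v`. -/
noncomputable def excessDist (G : SimpleGraph V) (u v : V) : ℝ := (G.dist u v - 1 : ℕ)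

theorem excessDist_nonneg (u v : V) : 0 ≤ G.excessDist u v := Nat.cast_nonneg _

theorem excessDist_comm (u v : V) : G.excessDist u v = G.excessDist v u := by
  rw [excessDist, excessDist, dist_comm]

theorem Connected.excessDist_ne_zero_iff (hG : G.Connected) {u v : V} :
    G.excessDist u v ≠ 0 ↔ Gᶜ.Adj u v := by
  have h0 := hG.dist_eq_zero_iff (u := u) (v := v)
  have h1 := dist_eq_one_iff_adj (G := G) (u := u) (v := v)
  simp only [excessDist, Nat.cast_ne_zero, compl_adj, ne_eq, ← h0, ← h1]
  omega

end SimpleGraph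

section DistanceLaplacian

variable {n : ℕ} {G : SimpleGraph (Fin n)}

theorem distLap_mulVec (x : Fin n → ℝ) :
    distLap G *ᵥ x = weightedLap (fun u v => (G.dist u v : ℝ)) x := by
  funext v
  rw [distLap, sub_mulVec, Pi.sub_apply, mulVec_diagonal]
  simp only [transm, weightedLap, mulVec, dotProduct, of_apply, mul_sub, Finset.sum_mul,
    Finset.sum_sub_distrib]

theorem distLap_isHermitian (G : SimpleGraph (Fin n)) : (distLap G).IsHermitian := by
  refine IsHermitian.ext fun u v => ?_
  by_cases h : u = v
  · subst h; simp
  · simp [distLap, diagonal_apply_ne _ h, diagonal_apply_ne _ (Ne.symm h), SimpleGraph.dist_comm]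

theorem sum_distLap_mulVec (x : Fin n → ℝ) : ∑ v, (distLap G *ᵥ x) v = 0 := by
  rw [distLap_mulVec]
  exact sum_weightedLap (fun u v => by rw [SimpleGraph.dist_comm]) x

theorem SimpleGraph.Connected.distLap_mulVec_eq (hG : G.Connected) (x : Fin n → ℝ) :
    distLap G *ᵥ x = fun v => n * x v - ∑ u, x u + weightedLap G.excessDist x v := by
  have hterm : ∀ v u,
      (G.dist v u : ℝ) * (x v - x u) = (x v - x u) + G.excessDist v u * (x v - x u) := by
    intro v u
    by_cases h : v = u
    · simp [h]
    · rw [SimpleGraph.excessDist, Nat.cast_sub (hG.pos_dist_of_ne h)]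
      ring
  funext v
  simp only [distLap_mulVec, weightedLap, hterm, Finset.sum_add_distrib, Finset.sum_sub_distrib]
  simp

theorem SimpleGraph.Connected.eq_zero_or_le_of_hasEigenvalue_distLap (hG : G.Connected) {t : ℝ}
    (ht : End.HasEigenvalue (toLin' (distLap G)) t) : t = 0 ∨ n ≤ t := by
  obtain ⟨x, hx, hx0⟩ := ht.exists_hasEigenvector
  rw [End.mem_eigenspace_iff, toLin'_apply] at hx
  refine or_iff_not_imp_left.mpr fun ht0 => ?_
  have hsum : ∑ u, x u = 0 := by
    have := sum_distLap_mulVec (G := G) x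
    simp only [hx, Pi.smul_apply, smul_eq_mul, ← Finset.mul_sum] at this
    exact (mul_eq_zero.mp this).resolve_left ht0
  have hform : x ⬝ᵥ (distLap G *ᵥ x) = n * (x ⬝ᵥ x) + x ⬝ᵥ weightedLap G.excessDist x := by
    simp only [hG.distLap_mulVec_eq, hsum, sub_zero, dotProduct, mul_add, Finset.sum_add_distrib,
      Finset.mul_sum]
    simp only [mul_left_comm]
  have hpos : 0 < x ⬝ᵥ x := by simpa using dotProduct_self_star_pos_iff.mpr hx0
  have hexcess := dotProduct_weightedLap_self_nonneg G.excessDist_comm G.excessDist_nonneg x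
  rw [hx, dotProduct_smul, smul_eq_mul] at hform
  nlinarith

theorem SimpleGraph.Connected.eigenspace_distLap_zero (hG : G.Connected) :
    End.eigenspace (toLin' (distLap G)) 0 = Submodule.span ℝ {1} := by
  ext x
  rw [End.mem_eigenspace_iff, toLin'_apply, zero_smul, distLap_mulVec,
    weightedLap_eq_zero_iff (fun u v => by rw [dist_comm]) (fun _ _ => Nat.cast_nonneg _),
    Submodule.mem_span_singleton]
  constructor
  · intro h
    obtain ⟨v₀⟩ := hG.nonempty
    refine ⟨x v₀, funext fun v => ?_⟩
    by_cases hv : v₀ = v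
    · simp [hv]
    · simpa using h v₀ v (Nat.cast_ne_zero.mpr (hG.pos_dist_of_ne hv).ne')
  · rintro ⟨a, rfl⟩ u v _
    rfl

theorem SimpleGraph.Connected.finrank_eigenspace_distLap_zero (hG : G.Connected) :
    finrank ℝ (End.eigenspace (toLin' (distLap G)) 0) = 1 := by
  have := hG.nonempty
  rw [hG.eigenspace_distLap_zero, finrank_span_singleton one_ne_zero]

theorem SimpleGraph.Connected.eigenspace_distLap_order [DecidableRel Gᶜ.Adj] (hG : G.Connected) :
    End.eigenspace (toLin' (distLap G)) n
      = LinearMap.ker (toLin' (Gᶜ.lapMatrix ℝ)) ⊓ LinearMap.ker (dotProductEquiv ℝ (Fin n) 1) := by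
  have hn : (n : ℝ) ≠ 0 := by
    obtain ⟨v⟩ := hG.nonempty
    exact Nat.cast_ne_zero.mpr (Fin.pos v).ne'
  ext x
  have hL : weightedLap G.excessDist x = 0 ↔ ∀ u v, Gᶜ.Adj u v → x u = x v := by
    simp only [weightedLap_eq_zero_iff G.excessDist_comm G.excessDist_nonneg,
      hG.excessDist_ne_zero_iff]
  rw [End.mem_eigenspace_iff, toLin'_apply, hG.distLap_mulVec_eq, Submodule.mem_inf,
    LinearMap.mem_ker, LinearMap.mem_ker, toLin'_apply,
    SimpleGraph.lapMatrix_mulVec_eq_zero_iff_forall_adj, dotProductEquiv_apply_apply,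
    one_dotProduct, ← hL]
  constructor
  · intro h
    have hLS : ∀ v, weightedLap G.excessDist x v = ∑ u, x u := fun v => by
      have := congrFun h v
      simp only [Pi.smul_apply, smul_eq_mul] at this
      linarith
    have hS : ∑ u, x u = 0 := by
      have := sum_weightedLap G.excessDist_comm x
      simp only [hLS, Finset.sum_const, Finset.card_univ, Fintype.card_fin, nsmul_eq_mul] at this
      exact (mul_eq_zero.mp this).resolve_left hn
    exact ⟨funext fun v => (hLS v).trans hS, hS⟩
  · rintro ⟨hL0, hS⟩
    funext v
    simp [hL0, hS]

theorem SimpleGraph.Connected.finrank_eigenspace_distLap_order (hG : G.Connected) :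
    finrank ℝ (End.eigenspace (toLin' (distLap G)) n) = Nat.card Gᶜ.ConnectedComponent - 1 := by
  classical
  have := hG.nonempty
  rw [hG.eigenspace_distLap_order, Nat.card_eq_fintype_card,
    ← Gᶜ.finrank_ker_lapMatrix_inf_ker_sum_add_one, Nat.add_sub_cancel]

end DistanceLaplacian

theorem distLap_second_smallest_eq_n_iff (n : ℕ) (G : SimpleGraph (Fin n))
    (hG : G.Connected) (μ : Fin n → ℝ) (hμ : IsDLSpec G μ) (hmono : Antitone μ) :
    (μ ⟨n - 2, by have h0 : 0 < n := Fin.pos_iff_nonempty.mpr hG.nonempty; omega⟩ = (n : ℝ) ↔ ¬ Gᶜ.Connected) ∧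
    Set.ncard {i : Fin n | μ i = (n : ℝ)} = Nat.card Gᶜ.ConnectedComponent - 1 := by
  have := hG.nonempty
  have hmult := (distLap_isHermitian G).ncard_eq_finrank_eigenspace hμ
  have hgap : ∀ i, μ i = 0 ∨ n ≤ μ i := fun i =>
    hG.eq_zero_or_le_of_hasEigenvalue_distLap (hasEigenvalue_toLin'_of_charpoly_eq_prod hμ i)
  have hcount : {i | μ i = n}.ncard = Nat.card Gᶜ.ConnectedComponent - 1 :=
    (hmult n).trans hG.finrank_eigenspace_distLap_order
  refine ⟨?_, hcount⟩
  rw [Fin.apply_penultimate_eq_iff_of_antitone hmono (Nat.cast_pos.mpr Fin.pos')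
    hgap ((hmult 0).trans hG.finrank_eigenspace_distLap_zero) _ rfl,
    ← Gᶜ.one_lt_card_connectedComponent_iff, ← Nat.sub_pos_iff_lt, ← hcount]
  exact (Set.ncard_pos).symm
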